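/- In the potential setup, let 0 < β ≤ 1, let f be admissible with w = w(f) and g = g(f), and set s := ℓ^⊤f − F*. Let r > 0 satisfy r ≈_{1+β/100} s, and let f̃ be admissible with |f̃_e − f_e| ≤ (β/(100p))·(f_e + δ_e) for every e ∈ E and |f̃_e − f_e| ≤ (β/(100p))·f_e for every e ∈ Ê. Define w̃ = w(f̃) and g̃ = (10m/r)·ℓ − w̃. Then w̃_e ≈_{1+β/2} w_e for every e ∈ E ∪ Ê, and |g̃_e − (s/r)·g_e| ≤ β·w_e for every e ∈ E ∪ Ê. -/
import Mathlib

open Sum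

/-- The barrier `V_p`: `V_p(x) = x^{-p}/p` for `x ≤ 1` and `V_p(x) = 1/p - log x` for `x ≥ 1`. -/
noncomputable def barrierV (p : ℕ) (x : ℝ) : ℝ :=
  if x ≤ 1 then x ^ (-(p : ℤ)) / p else 1 / p - Real.log x

/-- The weight function `W_p = -V_p'`: `W_p(x) = x^{-(p+1)}` for `x ≤ 1`, `W_p(x) = 1/x` for `x ≥ 1`. -/
noncomputable def barrierW (p : ℕ) (x : ℝ) : ℝ :=
  if x ≤ 1 then x ^ (-(p : ℤ) - 1) else 1 / x

/-- The weights `w(f)`: `w(f)_e = 1/(f_e + δ_e)` for `e ∈ E`, `w(f)_e = W_p(f_e)` for `e ∈ Ehat`. -/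
noncomputable def weight {E Ehat : Type*} (p : ℕ) (δ : E → ℝ) (f : E ⊕ Ehat → ℝ) : E ⊕ Ehat → ℝ :=
  Sum.elim (fun e => 1 / (f (inl e) + δ e)) (fun e => barrierW p (f (inr e)))

/-- The gradient `g(f) = (10m/(ℓᵀf - F*))·ℓ - w(f)`. -/
noncomputable def grad {E Ehat : Type*} [Fintype E] [Fintype Ehat] (p : ℕ) (ℓ : E ⊕ Ehat → ℝ)
    (δ : E → ℝ) (m Fstar : ℝ) (f : E ⊕ Ehat → ℝ) : E ⊕ Ehat → ℝ :=
  fun e => 10 * m / (∑ e', ℓ e' * f e' - Fstar) * ℓ e - weight p δ f e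

lemma barrierW_eq (p : ℕ) {x : ℝ} (hx : 0 < x) :
    barrierW p x = if x ≤ 1 then (x ^ (p + 1))⁻¹ else x⁻¹ := by
  unfold barrierW
  split_ifs with h
  · rw [show -(p:ℤ) - 1 = -(((p+1 : ℕ) : ℤ)) by push_cast; ring, zpow_neg, zpow_natCast]
  · rw [one_div]

lemma barrierW_pos (p : ℕ) {x : ℝ} (hx : 0 < x) : 0 < barrierW p x := by
  rw [barrierW_eq p hx]
  split_ifs <;> positivity

lemma barrierW_anti (p : ℕ) {a b : ℝ} (ha : 0 < a) (hab : a ≤ b) :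
    barrierW p b ≤ barrierW p a := by
  have hb : 0 < b := lt_of_lt_of_le ha hab
  rw [barrierW_eq p ha, barrierW_eq p hb]
  split_ifs with hb1 ha1 ha1
  · gcongr
  · linarith
  · calc b⁻¹ ≤ 1 := inv_le_one_of_one_le₀ (by linarith)
      _ ≤ (a ^ (p+1))⁻¹ := (one_le_inv₀ (by positivity)).mpr (pow_le_one₀ ha.le ha1)
  · gcongr

lemma barrierW_ratio (p : ℕ) {a b : ℝ} (ha : 0 < a) (hab : a ≤ b) :
    barrierW p a * a ^ (p + 1) ≤ barrierW p b * b ^ (p + 1) := by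
  have hb : 0 < b := lt_of_lt_of_le ha hab
  rw [barrierW_eq p ha, barrierW_eq p hb]
  split_ifs with ha1 hb1 hb1
  · rw [inv_mul_cancel₀ (by positivity), inv_mul_cancel₀ (by positivity)]
  · rw [inv_mul_cancel₀ (by positivity),
      show b⁻¹ * b ^ (p+1) = b ^ p * (b⁻¹ * b) by ring, inv_mul_cancel₀ hb.ne', mul_one]
    exact one_le_pow₀ (by linarith)
  · linarith
  · rw [show a⁻¹ * a ^ (p+1) = a ^ p * (a⁻¹ * a) by ring, inv_mul_cancel₀ ha.ne', mul_one,
      show b⁻¹ * b ^ (p+1) = b ^ p * (b⁻¹ * b) by ring, inv_mul_cancel₀ hb.ne', mul_one]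
    exact pow_le_pow_left₀ ha.le hab p

/-- Key numeric inequality: `(1+β/2)(1-β/(100p))^(p+1) ≥ 1`. -/
lemma key_ineq (p : ℕ) (hp : 2 ≤ p) {β : ℝ} (hβ0 : 0 < β) (hβ1 : β ≤ 1) :
    1 ≤ (1 + β / 2) * (1 - β / (100 * p)) ^ (p + 1) := by
  have hp' : (2:ℝ) ≤ (p:ℝ) := by exact_mod_cast hp
  set ε := β / (100 * (p:ℝ)) with hεdef
  have hε0 : 0 < ε := by positivity
  have hε : ((p:ℝ) + 1) * ε ≤ 3 * β / 200 := by
    rw [hεdef, mul_div_assoc', div_le_div_iff₀ (by nlinarith) (by norm_num)]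
    nlinarith
  have hbern : 1 + ((p:ℕ)+1 : ℕ) * (-ε) ≤ (1 + (-ε)) ^ (p + 1) :=
    one_add_mul_le_pow (by nlinarith) (p + 1)
  push_cast at hbern
  have h1 : 1 - 3 * β / 200 ≤ (1 - ε) ^ (p + 1) := by
    calc 1 - 3 * β / 200 ≤ 1 + ((p:ℝ)+1) * (-ε) := by nlinarith
      _ ≤ (1 + (-ε)) ^ (p+1) := hbern
      _ = (1 - ε) ^ (p+1) := by ring_nf
  nlinarith [h1]

lemma key_ineq' (p : ℕ) (hp : 2 ≤ p) {β : ℝ} (hβ0 : 0 < β) (hβ1 : β ≤ 1) :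
    (1 + β / (100 * p)) ^ (p + 1) ≤ 1 + β / 2 := by
  have hp' : (2:ℝ) ≤ (p:ℝ) := by exact_mod_cast hp
  set ε := β / (100 * (p:ℝ)) with hεdef
  have hε0 : 0 < ε := by positivity
  have hεs : ε ≤ β / 200 := by
    rw [hεdef, div_le_div_iff₀ (by nlinarith) (by norm_num)]; nlinarith
  have h1 := key_ineq p hp hβ0 hβ1
  rw [← hεdef] at h1
  have hq : 0 < (1 - ε) ^ (p + 1) := by
    apply pow_pos; nlinarith
  have hmul : (1 + ε) ^ (p + 1) * (1 - ε) ^ (p + 1) ≤ 1 := by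
    rw [← mul_pow]
    exact pow_le_one₀ (by nlinarith) (by nlinarith)
  have hA : 0 < (1 + ε) ^ (p + 1) := by positivity
  nlinarith [mul_le_mul_of_nonneg_right h1 hA.le]

/-- Stability of `barrierW` under multiplicative perturbation. -/
lemma barrierW_stab (p : ℕ) (hp : 2 ≤ p) {β x y : ℝ} (hβ0 : 0 < β) (hβ1 : β ≤ 1)
    (hx : 0 < x) (hy : 0 < y) (hclose : |y - x| ≤ β / (100 * p) * x) :
    (1 + β / 2)⁻¹ * barrierW p x ≤ barrierW p y ∧
      barrierW p y ≤ (1 + β / 2) * barrierW p x := by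
  have hp' : (2:ℝ) ≤ (p:ℝ) := by exact_mod_cast hp
  set ε := β / (100 * (p:ℝ)) with hεdef
  have hε0 : 0 < ε := by positivity
  obtain ⟨hc1, hc2⟩ := abs_le.1 hclose
  have hWx := barrierW_pos p hx
  have hWy := barrierW_pos p hy
  have hβ2 : (0:ℝ) < 1 + β / 2 := by linarith
  rcases le_total x y with hxy | hxy
  · -- x ≤ y : W y ≤ W x and W x ≤ (1+ε)^(p+1) W y
    refine ⟨?_, ?_⟩
    · rw [inv_mul_le_iff₀ hβ2]
      have h1 := barrierW_ratio p hx hxy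
      have h2 : y ^ (p+1) ≤ (1 + ε) ^ (p+1) * x ^ (p+1) := by
        rw [← mul_pow]
        exact pow_le_pow_left₀ hy.le (by linarith) _
      have h3 : barrierW p x * x ^ (p+1) ≤
          ((1 + ε) ^ (p+1) * barrierW p y) * x ^ (p+1) := by
        calc barrierW p x * x ^ (p+1) ≤ barrierW p y * y ^ (p+1) := h1
          _ ≤ barrierW p y * ((1 + ε) ^ (p+1) * x ^ (p+1)) := by
              exact mul_le_mul_of_nonneg_left h2 hWy.le
          _ = ((1 + ε) ^ (p+1) * barrierW p y) * x ^ (p+1) := by ring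
      have h4 : barrierW p x ≤ (1 + ε) ^ (p+1) * barrierW p y :=
        le_of_mul_le_mul_right h3 (by positivity)
      have h5 := key_ineq' p hp hβ0 hβ1
      rw [← hεdef] at h5
      nlinarith [mul_le_mul_of_nonneg_right h5 hWy.le]
    · calc barrierW p y ≤ barrierW p x := barrierW_anti p hx hxy
        _ ≤ (1 + β / 2) * barrierW p x := by nlinarith
  · -- y ≤ x : W x ≤ W y and W y ≤ (1-ε)^{-(p+1)} W x
    have hεs : ε ≤ β / 200 := by
      rw [hεdef, div_le_div_iff₀ (by nlinarith) (by norm_num)]; nlinarith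
    have h1ε : 0 < 1 - ε := by nlinarith
    refine ⟨?_, ?_⟩
    · rw [inv_mul_le_iff₀ hβ2]
      calc barrierW p x ≤ barrierW p y := barrierW_anti p hy hxy
        _ ≤ (1 + β / 2) * barrierW p y := by nlinarith
    · have h1 := barrierW_ratio p hy hxy
      have h2 : (1 - ε) ^ (p+1) * x ^ (p+1) ≤ y ^ (p+1) := by
        rw [← mul_pow]
        exact pow_le_pow_left₀ (by nlinarith) (by linarith) _
      have h3 : (barrierW p y * (1 - ε) ^ (p+1)) * x ^ (p+1) ≤
          barrierW p x * x ^ (p+1) := by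
        calc (barrierW p y * (1 - ε) ^ (p+1)) * x ^ (p+1)
            = barrierW p y * ((1 - ε) ^ (p+1) * x ^ (p+1)) := by ring
          _ ≤ barrierW p y * y ^ (p+1) := mul_le_mul_of_nonneg_left h2 hWy.le
          _ ≤ barrierW p x * x ^ (p+1) := h1
      have h4 : barrierW p y * (1 - ε) ^ (p+1) ≤ barrierW p x :=
        le_of_mul_le_mul_right h3 (by positivity)
      have h5 := key_ineq p hp hβ0 hβ1
      rw [← hεdef] at h5
      nlinarith [mul_le_mul_of_nonneg_left h5 hWy.le,
        mul_le_mul_of_nonneg_right h4 hβ2.le]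

/-- Stability of `1/x` under a `β/200`-multiplicative perturbation. -/
lemma inv_stab {β : ℝ} (hβ0 : 0 < β) (hβ1 : β ≤ 1) {A B : ℝ} (hA : 0 < A) (hB : 0 < B)
    (hc : |B - A| ≤ β / 200 * A) :
    (1 + β / 2)⁻¹ * (1 / A) ≤ 1 / B ∧ 1 / B ≤ (1 + β / 2) * (1 / A) := by
  obtain ⟨h1, h2⟩ := abs_le.1 hc
  have hβ2 : (0:ℝ) < 1 + β / 2 := by linarith
  constructor
  · rw [inv_mul_le_iff₀ hβ2, mul_one_div, div_le_div_iff₀ hA hB]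
    nlinarith [mul_nonneg (mul_nonneg hA.le hβ0.le) hβ0.le,
      mul_nonneg (mul_nonneg hA.le hβ0.le) (sub_nonneg.2 hβ1)]
  · rw [mul_one_div, div_le_div_iff₀ hB hA]
    nlinarith [mul_nonneg (mul_nonneg hA.le hβ0.le) hβ0.le,
      mul_nonneg (mul_nonneg hA.le hβ0.le) (sub_nonneg.2 hβ1)]

/-- Lemma `wtgw`, stability of gradients and weights: if `r ≈_{1+β/100} ℓᵀf - F*`
and `f̃` is entrywise `(β/(100p))`-multiplicatively close to `f`, then the weights
`w̃ = w(f̃)` satisfy `w̃ₑ ≈_{1+β/2} wₑ` and the approximate gradient `g̃ = (10m/r)·ℓ - w̃`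
satisfies `|g̃ₑ - (s/r)·gₑ| ≤ β·wₑ` for every edge `e`, where `s = ℓᵀf - F*`. -/
theorem gradient_weight_stability {E Ehat : Type*} [Fintype E] [Fintype Ehat]
    (p : ℕ) (hp : 2 ≤ p) (ℓ : E ⊕ Ehat → ℝ) (δ : E → ℝ) (hδ : ∀ e, 0 ≤ δ e)
    (m Fstar : ℝ) (hm : 1 ≤ m)
    (β : ℝ) (hβ0 : 0 < β) (hβ1 : β ≤ 1)
    (f : E ⊕ Ehat → ℝ)
    (hadm1 : Fstar < ∑ e, ℓ e * f e)
    (hadm2 : ∀ e : E, 0 < f (inl e) + δ e)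
    (hadm3 : ∀ e : Ehat, 0 < f (inr e))
    (r : ℝ) (hr0 : 0 < r)
    (hr1 : (1 + β / 100)⁻¹ * (∑ e, ℓ e * f e - Fstar) ≤ r)
    (hr2 : r ≤ (1 + β / 100) * (∑ e, ℓ e * f e - Fstar))
    (ft : E ⊕ Ehat → ℝ)
    (hft1 : Fstar < ∑ e, ℓ e * ft e)
    (hft2 : ∀ e : E, 0 < ft (inl e) + δ e)
    (hft3 : ∀ e : Ehat, 0 < ft (inr e))
    (hcloseE : ∀ e : E, |ft (inl e) - f (inl e)| ≤ (β / (100 * p)) * (f (inl e) + δ e))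
    (hcloseEhat : ∀ e : Ehat, |ft (inr e) - f (inr e)| ≤ (β / (100 * p)) * f (inr e)) :
    (∀ e, (1 + β / 2)⁻¹ * weight p δ f e ≤ weight p δ ft e ∧
        weight p δ ft e ≤ (1 + β / 2) * weight p δ f e) ∧
    (∀ e, |(10 * m / r * ℓ e - weight p δ ft e)
        - ((∑ e', ℓ e' * f e' - Fstar) / r) * grad p ℓ δ m Fstar f e|
        ≤ β * weight p δ f e) := by
  have hp' : (2:ℝ) ≤ (p:ℝ) := by exact_mod_cast hp
  have hεs : β / (100 * (p:ℝ)) ≤ β / 200 := by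
    rw [div_le_div_iff₀ (by nlinarith) (by norm_num)]; nlinarith
  have part1 : ∀ e, (1 + β / 2)⁻¹ * weight p δ f e ≤ weight p δ ft e ∧
      weight p δ ft e ≤ (1 + β / 2) * weight p δ f e := by
    rintro (e | e)
    · simp only [weight, Sum.elim_inl]
      have hA := hadm2 e
      have hB := hft2 e
      have hc : |(ft (inl e) + δ e) - (f (inl e) + δ e)| ≤ β / 200 * (f (inl e) + δ e) := by
        have := hcloseE e
        calc |(ft (inl e) + δ e) - (f (inl e) + δ e)| = |ft (inl e) - f (inl e)| := by
              ring_nf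
          _ ≤ β / (100 * p) * (f (inl e) + δ e) := this
          _ ≤ β / 200 * (f (inl e) + δ e) := by
              exact mul_le_mul_of_nonneg_right hεs hA.le
      exact inv_stab hβ0 hβ1 hA hB hc
    · simp only [weight, Sum.elim_inr]
      exact barrierW_stab p hp hβ0 hβ1 (hadm3 e) (hft3 e) (hcloseEhat e)
  refine ⟨part1, fun e => ?_⟩
  set s := ∑ e', ℓ e' * f e' - Fstar with hsdef
  have hs : 0 < s := sub_pos.2 hadm1
  set w := weight p δ f e with hwdef
  set wt := weight p δ ft e with hwtdef
  have hw : 0 < w := by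
    rw [hwdef]
    rcases e with e | e
    · simp only [weight, Sum.elim_inl]; exact one_div_pos.mpr (hadm2 e)
    · simp only [weight, Sum.elim_inr]; exact barrierW_pos p (hadm3 e)
  have hβ2 : (0:ℝ) < 1 + β / 2 := by linarith
  obtain ⟨hw1, hw2⟩ := part1 e
  rw [← hwdef, ← hwtdef] at hw1 hw2
  -- w̃ ≥ (1 - β/2) w
  have hw1' : (1 - β / 2) * w ≤ wt := by
    have hc : (1 - β / 2) ≤ (1 + β / 2)⁻¹ := by
      rw [← one_div, le_div_iff₀ hβ2]; nlinarith
    calc (1 - β / 2) * w ≤ (1 + β / 2)⁻¹ * w := mul_le_mul_of_nonneg_right hc hw.le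
      _ ≤ wt := hw1
  -- bounds on s / r
  have hβ100 : (0:ℝ) < 1 + β / 100 := by linarith
  have ht1 : s / r ≤ 1 + β / 100 := by
    rw [div_le_iff₀ hr0]
    rw [inv_mul_le_iff₀ hβ100] at hr1
    linarith
  have ht2 : 1 - β / 100 ≤ s / r := by
    rw [le_div_iff₀ hr0]
    nlinarith [mul_le_mul_of_nonneg_left hr2 (show (0:ℝ) ≤ 1 - β / 100 by linarith),
      mul_nonneg (sq_nonneg β) hs.le]
  -- algebraic identity
  have hkey : (10 * m / r * ℓ e - wt) - (s / r) * grad p ℓ δ m Fstar f e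
      = s / r * w - wt := by
    simp only [grad, ← hsdef, ← hwdef]
    field_simp
    ring
  rw [hkey, abs_le]
  constructor
  · nlinarith [mul_le_mul_of_nonneg_right ht2 hw.le]
  · nlinarith [mul_le_mul_of_nonneg_right ht1 hw.le]
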